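/- arXiv:1803.09159 — 2 statements merged into one kernel-verified Lean document; each statement's English description precedes it below -/
import Mathlib

section
/- Let the data cells be {x_(1),…,x_(M)} sorted in decreasing order of β_mle(x) = N_α(x)/N(x), and suppose the true affected set S^T = {x_(1),…,x_(t)} consists of the top t cells. Let r_mle(x) = β_mle(x) − α, and suppose all cells in S^T satisfy r_mle(x) > 0. Suppose the effect is ν-homogeneous with ν = r_mle(x_(1)) / R(r_mle(x_(1))) where, for the NA score, R(r) = r/2 (so ν = 2), i.e., max_{x∈S^T} r_mle(x) < 2·min_{x∈S^T} r_mle(x). Then for every cell x ∈ S^T, β_max(x) = 2β_mle(x) − α satisfies β_max(x) > β_mle(x') for all x' ∈ S^T; consequently, at β = max over subsets containing only cells of S^T of the pooled β_mle, every ω^NA(α, β, N_α(x), N(x)) for x ∈ S^T is strictly positive. -/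
/-!
Writing `b = Nα(x)/N(x)`, the score factors as
`ω^NA(α, β, Nα(x), N(x)) = N(x) (β - α) (2b - α - β) / (2α(1 - α))`, so it is positive exactly for
`α < β < 2b - α`. The pooled ratio of a subset of affected cells is a mediant of their individual
ratios, hence lies strictly between `α` and the largest of them, and 2-homogeneity puts every
affected ratio below `2b - α`.
-/

open Finset

section PooledRatio

variable {ι 𝕜 : Type*} [Field 𝕜] [LinearOrder 𝕜] [IsStrictOrderedRing 𝕜]
  {S : Finset ι} {a n : ι → 𝕜} {c : 𝕜}

theorem lt_sum_div_sum_of_forall_lt_div (hS : S.Nonempty) (hn : ∀ z ∈ S, 0 < n z)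
    (h : ∀ z ∈ S, c < a z / n z) : c < (∑ z ∈ S, a z) / ∑ z ∈ S, n z := by
  rw [lt_div_iff₀ (sum_pos hn hS), mul_sum]
  exact sum_lt_sum_of_nonempty hS fun z hz => (lt_div_iff₀ (hn z hz)).1 (h z hz)

theorem sum_div_sum_lt_of_forall_div_lt (hS : S.Nonempty) (hn : ∀ z ∈ S, 0 < n z)
    (h : ∀ z ∈ S, a z / n z < c) : (∑ z ∈ S, a z) / ∑ z ∈ S, n z < c := by
  rw [div_lt_iff₀ (sum_pos hn hS), mul_sum]
  exact sum_lt_sum_of_nonempty hS fun z hz => (div_lt_iff₀ (hn z hz)).1 (h z hz)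

end PooledRatio

noncomputable def omegaNA (α β Nα N : ℝ) : ℝ :=
  Nα * (β - α) / (α * (1 - α)) + N * (α ^ 2 - β ^ 2) / (2 * α * (1 - α))

theorem omegaNA_eq (α β Nα : ℝ) {N : ℝ} (hN : N ≠ 0) :
    omegaNA α β Nα N = N * (β - α) * (2 * (Nα / N) - α - β) / (2 * α * (1 - α)) := by
  calc omegaNA α β Nα N = (2 * Nα * (β - α) + N * (α ^ 2 - β ^ 2)) / (2 * α * (1 - α)) := by
        unfold omegaNA
        rw [mul_assoc 2 α]
        generalize α * (1 - α) = d
        ring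
    _ = _ := by congr 1; field_simp; ring

theorem omegaNA_pos {α β Nα N : ℝ} (hα : α ∈ Set.Ioo (0 : ℝ) 1) (hN : 0 < N)
    (hαβ : α < β) (hβ : β < 2 * (Nα / N) - α) : 0 < omegaNA α β Nα N := by
  obtain ⟨hα0, hα1⟩ := hα
  rw [omegaNA_eq α β Nα hN.ne']
  have hden : 0 < 2 * α * (1 - α) := by nlinarith
  exact div_pos (mul_pos (mul_pos hN (sub_pos.2 hαβ)) (by linarith)) hden

theorem homogeneity_key_step_general {ι : Type*} (ST : Finset ι)
    (Nα N : ι → ℝ) (α : ℝ) (hα : α ∈ Set.Ioo (0:ℝ) 1)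
    (hN : ∀ x ∈ ST, 0 < N x)
    (hr : ∀ x ∈ ST, 0 < Nα x / N x - α)
    (hhom : ∀ x ∈ ST, ∀ x' ∈ ST, Nα x / N x - α < 2 * (Nα x' / N x' - α)) :
    (∀ x ∈ ST, ∀ x' ∈ ST, Nα x' / N x' < 2 * (Nα x / N x) - α) ∧
    (∀ S ⊆ ST, S.Nonempty → ∀ x ∈ ST,
      0 < Nα x * ((∑ z ∈ S, Nα z) / (∑ z ∈ S, N z) - α) / (α * (1 - α)) +
          N x * (α^2 - ((∑ z ∈ S, Nα z) / (∑ z ∈ S, N z))^2) /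
            (2 * α * (1 - α))) := by
  have hβmax : ∀ x ∈ ST, ∀ x' ∈ ST, Nα x' / N x' < 2 * (Nα x / N x) - α :=
    fun x hx x' hx' => by linarith [hhom x' hx' x hx]
  refine ⟨hβmax, fun S hS hSne x hx => omegaNA_pos hα (hN x hx) ?_ ?_⟩
  · exact lt_sum_div_sum_of_forall_lt_div hSne (fun z hz => hN z (hS hz))
      fun z hz => by linarith [hr z (hS hz)]
  · exact sum_div_sum_lt_of_forall_div_lt hSne (fun z hz => hN z (hS hz))
      fun z hz => hβmax x hx z (hS hz)

/-- Key step of the homogeneity theorem for the NA score (ν = 2): under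
2-homogeneity of positive effects, every affected cell's upper root
`β_max(x) = 2·β_mle(x) − α` exceeds every affected cell's `β_mle(x')`, and the
ω^NA contribution of every affected cell is strictly positive at the pooled
`β_mle` of any nonempty subset of affected cells. -/
theorem homogeneity_key_step {ι : Type*} (ST : Finset ι) (hST : ST.Nonempty)
    (Nα N : ι → ℝ) (α : ℝ) (hα : α ∈ Set.Ioo (0:ℝ) 1)
    (hN : ∀ x ∈ ST, 0 < N x) (hNα : ∀ x ∈ ST, 0 ≤ Nα x)
    (hr : ∀ x ∈ ST, 0 < Nα x / N x - α)
    (hhom : ∀ x ∈ ST, ∀ x' ∈ ST, Nα x / N x - α < 2 * (Nα x' / N x' - α)) :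
    (∀ x ∈ ST, ∀ x' ∈ ST, Nα x' / N x' < 2 * (Nα x / N x) - α) ∧
    (∀ S ⊆ ST, S.Nonempty → ∀ x ∈ ST,
      0 < Nα x * ((∑ z ∈ S, Nα z) / (∑ z ∈ S, N z) - α) / (α * (1 - α)) +
          N x * (α^2 - ((∑ z ∈ S, Nα z) / (∑ z ∈ S, N z))^2) /
            (2 * α * (1 - α))) :=
  homogeneity_key_step_general ST Nα N α hα hN hr hhom
end

section
/- Let D be a finite set of cells with counts N_α(x) ≥ 0 and N(x) > 0, fix α ∈ (0,1), and let r_mle(x) = N_α(x)/N(x) − α. Let S^T ⊆ D, let η = (Σ_{x∈S^T} N(x))/(Σ_{x∈D} N(x)), and suppose r_mle(x) > 0 for all x ∈ S^T and r_mle(x) ≥ 0 for all x. If min_{x∈S^T} r_mle(x) > (2/η)·max_{x∉S^T} r_mle(x), then for every x' ∉ S^T, 2·r_mle(x') < (Σ_{x∈D}(N_α(x) − αN(x)))/(Σ_{x∈D} N(x)) = β_mle(D) − α. -/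
/-- Computational core of the strength theorem for the NA score: if the minimum
affected effect exceeds (2/η) times the maximum unaffected effect, then for
every unaffected cell, `2·r_mle(x') < β_mle(D) − α`. -/
theorem strength_key_step {ι : Type*} (D ST : Finset ι) (hsub : ST ⊆ D)
    (hSTne : ST.Nonempty) (Nα N : ι → ℝ) (α : ℝ) (hα : α ∈ Set.Ioo (0:ℝ) 1)
    (hN : ∀ x ∈ D, 0 < N x) (hNα : ∀ x ∈ D, 0 ≤ Nα x)
    (hraff : ∀ x ∈ ST, 0 < Nα x / N x - α)
    (hrall : ∀ x ∈ D, 0 ≤ Nα x / N x - α)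
    (hstrong : ∀ x ∈ ST, ∀ x' ∈ D, x' ∉ ST →
      (2 / ((∑ z ∈ ST, N z) / (∑ z ∈ D, N z))) * (Nα x' / N x' - α) <
        Nα x / N x - α) :
    ∀ x' ∈ D, x' ∉ ST →
      2 * (Nα x' / N x' - α) <
        (∑ x ∈ D, (Nα x - α * N x)) / (∑ x ∈ D, N x) := by
  intro x' hx'D hx'S
  have hSST : 0 < ∑ z ∈ ST, N z :=
    Finset.sum_pos (fun z hz => hN z (hsub hz)) hSTne
  have hSD : 0 < ∑ z ∈ D, N z :=
    Finset.sum_pos hN ⟨hSTne.choose, hsub hSTne.choose_spec⟩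
  set η : ℝ := (∑ z ∈ ST, N z) / (∑ z ∈ D, N z) with hη
  have hηpos : 0 < η := div_pos hSST hSD
  set r : ι → ℝ := fun x => Nα x / N x - α with hr
  -- step 1: sum over ST strict inequality
  have h1 : ∑ x ∈ ST, (2 / η * r x') * N x < ∑ x ∈ ST, r x * N x := by
    apply Finset.sum_lt_sum_of_nonempty hSTne
    intro x hx
    exact mul_lt_mul_of_pos_right (hstrong x hx x' hx'D hx'S) (hN x (hsub hx))
  have hlhs : ∑ x ∈ ST, (2 / η * r x') * N x
      = 2 * r x' * (∑ z ∈ D, N z) := by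
    rw [← Finset.mul_sum]
    rw [hη]
    field_simp [hη]
  -- r x * N x = Nα x - α * N x on D
  have hrN : ∀ x ∈ D, r x * N x = Nα x - α * N x := by
    intro x hx
    have := (hN x hx).ne'
    rw [hr]
    field_simp [hr]
  have h2 : ∑ x ∈ ST, r x * N x ≤ ∑ x ∈ D, (Nα x - α * N x) := by
    calc ∑ x ∈ ST, r x * N x = ∑ x ∈ ST, (Nα x - α * N x) :=
          Finset.sum_congr rfl fun x hx => hrN x (hsub hx)
      _ ≤ ∑ x ∈ D, (Nα x - α * N x) := by
          apply Finset.sum_le_sum_of_subset_of_nonneg hsub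
          intro x hx _
          have h4 : (0:ℝ) ≤ r x * N x := mul_nonneg (hrall x hx) (hN x hx).le
          linarith [hrN x hx]
  have key : 2 * r x' * (∑ z ∈ D, N z) < ∑ x ∈ D, (Nα x - α * N x) := by
    rw [← hlhs]; exact lt_of_lt_of_le h1 h2
  rw [lt_div_iff₀ hSD]
  exact key
end
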